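/- arXiv:0707.0442 — 2 statements merged into one kernel-verified Lean document; each statement's English description precedes it below -/
import Mathlib

section
/- For any trace class operators K_n and K_∞ on a Hilbert space with M := max(‖K_n‖, ‖K_∞‖) < 1, one has |log det(I − K_n) − log det(I − K_∞)| ≤ ‖K_n − K_∞‖_tr / (1 − M). -/
/-!
Writing `Kₙ^(m+1) - K∞^(m+1) = ∑_{j ≤ m} Kₙ^j (Kₙ - K∞) K∞^(m-j)` and using that the trace norm is
an ideal norm, `|tr Kₙ^(m+1) - tr K∞^(m+1)| ≤ (m+1) M^m ‖Kₙ - K∞‖_tr`. The factor `m + 1` cancels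
the denominator of the logarithmic series, leaving a geometric series with sum `‖Kₙ - K∞‖_tr / (1 - M)`. The same ideal property, `|tr K^(i+1)| ≤ ‖K‖^i ‖K‖_tr`, makes
the logarithmic series converge.
-/

theorem pow_succ_sub_pow_succ_eq_sum {R : Type*} [Ring R] (a b : R) (m : ℕ) :
    a ^ (m + 1) - b ^ (m + 1) = ∑ j ∈ Finset.range (m + 1), a ^ j * (a - b) * b ^ (m - j) := by
  have step : ∀ j ∈ Finset.range (m + 1), a ^ j * (a - b) * b ^ (m - j)
      = a ^ (j + 1) * b ^ (m + 1 - (j + 1)) - a ^ j * b ^ (m + 1 - j) := by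
    intro j hj
    rw [Nat.succ_sub_succ, Nat.sub_add_comm (Finset.mem_range_succ_iff.mp hj), pow_succ, pow_succ']
    noncomm_ring
  rw [Finset.sum_congr rfl step, Finset.sum_range_sub (fun j => a ^ j * b ^ (m + 1 - j))]
  simp

section IdealNorm

variable {R E : Type*} [SeminormedRing R] [SeminormedAddCommGroup E]
  {ν : R → ℝ}

theorem pow_mul_le_of_mul_le_left (hleft : ∀ a b, ν (a * b) ≤ ‖a‖ * ν b) (a x : R) :
    ∀ j : ℕ, ν (a ^ j * x) ≤ ‖a‖ ^ j * ν x
  | 0 => by simp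
  | j + 1 => calc
      ν (a ^ (j + 1) * x) = ν (a * (a ^ j * x)) := by rw [pow_succ', mul_assoc]
      _ ≤ ‖a‖ * (‖a‖ ^ j * ν x) :=
        (hleft _ _).trans <|
          mul_le_mul_of_nonneg_left (pow_mul_le_of_mul_le_left hleft a x j) (norm_nonneg a)
      _ = ‖a‖ ^ (j + 1) * ν x := by ring

theorem mul_pow_le_of_mul_le_right (hright : ∀ a b, ν (a * b) ≤ ν a * ‖b‖) (x b : R) :
    ∀ k : ℕ, ν (x * b ^ k) ≤ ν x * ‖b‖ ^ k
  | 0 => by simp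
  | k + 1 => calc
      ν (x * b ^ (k + 1)) = ν (x * b ^ k * b) := by rw [pow_succ, mul_assoc]
      _ ≤ ν x * ‖b‖ ^ k * ‖b‖ :=
        (hright _ _).trans <|
          mul_le_mul_of_nonneg_right (mul_pow_le_of_mul_le_right hright x b k) (norm_nonneg b)
      _ = ν x * ‖b‖ ^ (k + 1) := by ring

theorem norm_map_pow_succ_sub_map_pow_succ_le (tr : R →+ E) (htr : ∀ x, ‖tr x‖ ≤ ν x)
    (hleft : ∀ a b, ν (a * b) ≤ ‖a‖ * ν b) (hright : ∀ a b, ν (a * b) ≤ ν a * ‖b‖)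
    {a b : R} {M : ℝ} (ha : ‖a‖ ≤ M) (hb : ‖b‖ ≤ M) (m : ℕ) : ‖tr (a ^ (m + 1)) - tr (b ^ (m + 1))‖ ≤ (m + 1) * M ^ m * ν (a - b) := by
  have hM : 0 ≤ M := (norm_nonneg a).trans ha
  have hν : 0 ≤ ν (a - b) := (norm_nonneg _).trans (htr _)
  have term : ∀ j ∈ Finset.range (m + 1),
      ‖tr (a ^ j * (a - b) * b ^ (m - j))‖ ≤ M ^ m * ν (a - b) := by
    intro j hj
    calc ‖tr (a ^ j * (a - b) * b ^ (m - j))‖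
        ≤ ν (a ^ j * ((a - b) * b ^ (m - j))) := by rw [← mul_assoc]; exact htr _
      _ ≤ ‖a‖ ^ j * (ν (a - b) * ‖b‖ ^ (m - j)) :=
        (pow_mul_le_of_mul_le_left hleft _ _ j).trans <| mul_le_mul_of_nonneg_left
          (mul_pow_le_of_mul_le_right hright _ _ _) (by positivity)
      _ ≤ M ^ j * (ν (a - b) * M ^ (m - j)) := by gcongr
      _ = M ^ m * ν (a - b) := by
        rw [← Nat.add_sub_cancel' (Finset.mem_range_succ_iff.mp hj), pow_add,
          Nat.add_sub_cancel_left]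
        ring
  calc ‖tr (a ^ (m + 1)) - tr (b ^ (m + 1))‖
      = ‖∑ j ∈ Finset.range (m + 1), tr (a ^ j * (a - b) * b ^ (m - j))‖ := by
        rw [← map_sub, pow_succ_sub_pow_succ_eq_sum, map_sum]
    _ ≤ ∑ j ∈ Finset.range (m + 1), M ^ m * ν (a - b) := norm_sum_le_of_le _ term
    _ = (m + 1) * M ^ m * ν (a - b) := by simp [mul_assoc]

theorem summable_map_pow_succ_div (tr : R →+ ℂ) (htr : ∀ x, ‖tr x‖ ≤ ν x)
    (hleft : ∀ a b, ν (a * b) ≤ ‖a‖ * ν b) {a : R} (ha : ‖a‖ < 1) :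
    Summable fun i : ℕ => tr (a ^ (i + 1)) / ((i : ℂ) + 1) := by
  refine Summable.of_norm_bounded
    ((summable_geometric_of_lt_one (norm_nonneg a) ha).mul_right (ν a)) fun i => ?_
  calc ‖tr (a ^ (i + 1)) / ((i : ℂ) + 1)‖ = ‖tr (a ^ i * a)‖ / (i + 1) := by
        rw [norm_div, ← pow_succ]; norm_cast
    _ ≤ ‖tr (a ^ i * a)‖ := div_le_self (norm_nonneg _) (by linarith [i.cast_nonneg (α := ℝ)])
    _ ≤ ‖a‖ ^ i * ν a := (htr _).trans (pow_mul_le_of_mul_le_left hleft a a i)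

end IdealNorm

theorem norm_tsum_sub_tsum_le_of_le_geometric {E : Type*} [NormedAddCommGroup E]
    {u v : ℕ → E}
    (hu : Summable u) (hv : Summable v) {M D : ℝ} (hM0 : 0 ≤ M) (hM1 : M < 1)
    (h : ∀ i, ‖u i - v i‖ ≤ M ^ i * D) : ‖∑' i, u i - ∑' i, v i‖ ≤ D / (1 - M) := by
  rw [← hu.tsum_sub hv, div_eq_inv_mul]
  exact tsum_of_norm_bounded ((hasSum_geometric_of_lt_one hM0 hM1).mul_right D) h

theorem stmt_0_general {H : Type*} [NormedAddCommGroup H] [InnerProductSpace ℂ H]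
    (tr : (H →L[ℂ] H) → ℂ) (trNorm : (H →L[ℂ] H) → ℝ)
    (htr : ∀ T, ‖tr T‖ ≤ trNorm T)
    (htr_add : ∀ A B, tr (A + B) = tr A + tr B)
    (hmul_left : ∀ A B, trNorm (A * B) ≤ ‖A‖ * trNorm B)
    (hmul_right : ∀ A B, trNorm (A * B) ≤ trNorm A * ‖B‖)
    (Kn Kinf : H →L[ℂ] H) (M : ℝ)
    (hM : M = max ‖Kn‖ ‖Kinf‖) (hM1 : M < 1)
    (logdetOneSub : (H →L[ℂ] H) → ℂ)
    (hlogdet : ∀ K : H →L[ℂ] H, ‖K‖ < 1 →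
      logdetOneSub K = -∑' i : ℕ, tr (K ^ (i + 1)) / ((i : ℂ) + 1)) :
    ‖logdetOneSub Kn - logdetOneSub Kinf‖ ≤ trNorm (Kn - Kinf) / (1 - M) := by
  let trHom : (H →L[ℂ] H) →+ ℂ := AddMonoidHom.mk' tr htr_add
  have hKn : ‖Kn‖ ≤ M := hM ▸ le_max_left _ _
  have hKinf : ‖Kinf‖ ≤ M := hM ▸ le_max_right _ _
  have hKn1 := hKn.trans_lt hM1
  have hKinf1 := hKinf.trans_lt hM1
  rw [hlogdet Kn hKn1, hlogdet Kinf hKinf1, neg_sub_neg, norm_sub_rev]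
  refine norm_tsum_sub_tsum_le_of_le_geometric
    (summable_map_pow_succ_div trHom htr hmul_left hKn1)
    (summable_map_pow_succ_div trHom htr hmul_left hKinf1) ((norm_nonneg _).trans hKn) hM1
    fun i => ?_
  calc ‖tr (Kn ^ (i + 1)) / ((i : ℂ) + 1) - tr (Kinf ^ (i + 1)) / ((i : ℂ) + 1)‖
      = ‖trHom (Kn ^ (i + 1)) - trHom (Kinf ^ (i + 1))‖ / (i + 1) := by
        rw [← sub_div, norm_div]; norm_cast
    _ ≤ (i + 1) * M ^ i * trNorm (Kn - Kinf) / (i + 1) := by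
        gcongr
        exact norm_map_pow_succ_sub_map_pow_succ_le trHom htr hmul_left hmul_right hKn hKinf i
    _ = M ^ i * trNorm (Kn - Kinf) := by field_simp

/-- For trace class operators `Kn`, `Kinf` on a Hilbert space with
`M := max ‖Kn‖ ‖Kinf‖ < 1`, one has
`|log det(I − Kn) − log det(I − Kinf)| ≤ ‖Kn − Kinf‖_tr / (1 − M)`, where
`log det (I − K) = −∑_{i ≥ 1} tr (K^i) / i` for `‖K‖ < 1`. -/
theorem stmt_0 {H : Type*} [NormedAddCommGroup H] [InnerProductSpace ℂ H] [CompleteSpace H]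
    (tr : (H →L[ℂ] H) → ℂ) (trNorm : (H →L[ℂ] H) → ℝ)
    (htr : ∀ T, ‖tr T‖ ≤ trNorm T)
    (htrNorm_nonneg : ∀ T, 0 ≤ trNorm T)
    (htr_add : ∀ A B, tr (A + B) = tr A + tr B)
    (hmul_left : ∀ A B, trNorm (A * B) ≤ ‖A‖ * trNorm B)
    (hmul_right : ∀ A B, trNorm (A * B) ≤ trNorm A * ‖B‖)
    (Kn Kinf : H →L[ℂ] H) (M : ℝ)
    (hM : M = max ‖Kn‖ ‖Kinf‖) (hM1 : M < 1)
    (logdetOneSub : (H →L[ℂ] H) → ℂ)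
    (hlogdet : ∀ K : H →L[ℂ] H, ‖K‖ < 1 →
      logdetOneSub K = -∑' i : ℕ, tr (K ^ (i + 1)) / ((i : ℂ) + 1))
    (hsummable : ∀ K : H →L[ℂ] H, ‖K‖ < 1 →
      Summable fun i : ℕ => tr (K ^ (i + 1)) / ((i : ℂ) + 1)) :
    ‖logdetOneSub Kn - logdetOneSub Kinf‖ ≤ trNorm (Kn - Kinf) / (1 - M) :=
  stmt_0_general tr trNorm htr htr_add hmul_left hmul_right Kn Kinf M hM hM1 logdetOneSub hlogdet
end

section
/- For x ≥ 0, the Airy kernel restricted to (x,∞), K⁽⁰⁾(u,v) = ∫_0^∞ A(u+w)A(v+w) dw, satisfies the bound ‖K⁽⁰⁾‖₁ := sup_{u>x} ∫_x^∞ |K⁽⁰⁾(u,v)| dv ≤ (∫_x^∞ A(v) dv)², provided A is nonnegative and monotonically decreasing on [0,∞). -/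
open MeasureTheory Set

/-! Since `A` is decreasing, `A (u + w) ≤ A (x + w)` and `A (v + w) ≤ A v` for `u > x`, so
`0 ≤ K⁽⁰⁾(u,v) ≤ A v · ∫_x^∞ A`; integrating in `v` over `(x,∞)` gives the square. -/

section Shift

variable {E : Type*} [NormedAddCommGroup E]

lemma preimage_const_add_Ioi_self (a : ℝ) :
    (fun w : ℝ => a + w) ⁻¹' Ioi a = Ioi 0 := by
  ext w; simp

lemma integrableOn_Ioi_zero_comp_const_add {f : ℝ → E} {a : ℝ} (hf : IntegrableOn f (Ioi a)) :
    IntegrableOn (fun w => f (a + w)) (Ioi 0) := by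
  rw [← preimage_const_add_Ioi_self a]
  exact ((measurePreserving_add_left volume a).integrableOn_comp_preimage
    (Homeomorph.addLeft a).measurableEmbedding).mpr hf

lemma setIntegral_Ioi_zero_comp_const_add [NormedSpace ℝ E] (f : ℝ → E) (a : ℝ) :
    ∫ w in Ioi (0 : ℝ), f (a + w) = ∫ t in Ioi a, f t := by
  rw [← preimage_const_add_Ioi_self a,
    (measurePreserving_add_left volume a).setIntegral_preimage_emb
      (Homeomorph.addLeft a).measurableEmbedding]

end Shift

section AiryKernel

variable {A : ℝ → ℝ} (hA_nonneg : ∀ t, 0 ≤ t → 0 ≤ A t)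
include hA_nonneg

lemma mul_comp_add_nonneg {u v w : ℝ} (hu : 0 ≤ u) (hv : 0 ≤ v) (hw : 0 ≤ w) :
    0 ≤ A (u + w) * A (v + w) :=
  mul_nonneg (hA_nonneg _ (by linarith)) (hA_nonneg _ (by linarith))

lemma setIntegral_mul_comp_add_nonneg {u v : ℝ} (hu : 0 ≤ u) (hv : 0 ≤ v) :
    0 ≤ ∫ w in Ioi (0 : ℝ), A (u + w) * A (v + w) :=
  setIntegral_nonneg measurableSet_Ioi fun _ hw => mul_comp_add_nonneg hA_nonneg hu hv (le_of_lt hw)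

lemma setIntegral_mul_comp_add_le (hA_anti : AntitoneOn A (Ici 0)) {a u v : ℝ} (ha : 0 ≤ a)
    (hau : a ≤ u) (hv : 0 ≤ v) (hA_int : IntegrableOn A (Ioi a)) :
    ∫ w in Ioi (0 : ℝ), A (u + w) * A (v + w) ≤ A v * ∫ t in Ioi a, A t := by
  rw [mul_comm, ← integral_mul_const, ← setIntegral_Ioi_zero_comp_const_add (A · * A v)]
  refine integral_mono_of_nonneg ?_ ((integrableOn_Ioi_zero_comp_const_add hA_int).mul_const _) ?_
  · filter_upwards [ae_restrict_mem measurableSet_Ioi] with w (hw : 0 < w)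
    exact mul_comp_add_nonneg hA_nonneg (ha.trans hau) hv hw.le
  · filter_upwards [ae_restrict_mem measurableSet_Ioi] with w (hw : 0 < w)
    have hAu : A (u + w) ≤ A (a + w) :=
      hA_anti (mem_Ici.2 (by linarith)) (mem_Ici.2 (by linarith)) (by linarith)
    have hAv : A (v + w) ≤ A v := hA_anti (mem_Ici.2 hv) (mem_Ici.2 (by linarith)) (by linarith)
    exact mul_le_mul hAu hAv (hA_nonneg _ (by linarith)) (hA_nonneg _ (by linarith))

end AiryKernel

theorem stmt_8_general (A : ℝ → ℝ) (x : ℝ) (hx : 0 ≤ x)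
    (hA_nonneg : ∀ u, 0 ≤ u → 0 ≤ A u)
    (hA_mono : ∀ u v, 0 ≤ u → u ≤ v → A v ≤ A u)
    (hA_int : IntegrableOn A (Set.Ioi (0 : ℝ))) :
    ∀ u, x < u →
      (∫ v in Set.Ioi x, |∫ w in Set.Ioi (0 : ℝ), A (u + w) * A (v + w)|)
        ≤ (∫ v in Set.Ioi x, A v) ^ 2 := by
  intro u hu
  have hA_anti : AntitoneOn A (Ici 0) := fun s hs _ _ hst => hA_mono s _ hs hst
  have hAx_int : IntegrableOn A (Ioi x) := hA_int.mono_set (Ioi_subset_Ioi hx)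
  have hkernel_le : ∀ v ∈ Ioi x, |∫ w in Ioi (0 : ℝ), A (u + w) * A (v + w)|
      ≤ A v * ∫ t in Ioi x, A t := fun v (hv : x < v) => by
    rw [abs_of_nonneg (setIntegral_mul_comp_add_nonneg hA_nonneg (by linarith) (by linarith))]
    exact setIntegral_mul_comp_add_le hA_nonneg hA_anti hx hu.le (by linarith) hAx_int
  calc (∫ v in Ioi x, |∫ w in Ioi (0 : ℝ), A (u + w) * A (v + w)|)
      ≤ ∫ v in Ioi x, A v * ∫ t in Ioi x, A t :=
        integral_mono_of_nonneg (.of_forall fun _ => abs_nonneg _) (hAx_int.mul_const _)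
          ((ae_restrict_iff' measurableSet_Ioi).mpr (.of_forall hkernel_le))
    _ = (∫ v in Ioi x, A v) ^ 2 := by rw [integral_mul_const, sq]

/-- For `x ≥ 0` and `A` nonnegative, decreasing and integrable on
`[0,∞)`, the Airy kernel `K⁽⁰⁾(u,v) = ∫_0^∞ A(u+w)A(v+w) dw` on `(x,∞)` satisfies
`sup_{u>x} ∫_x^∞ |K⁽⁰⁾(u,v)| dv ≤ (∫_x^∞ A(v) dv)²`. -/
theorem stmt_8 (A : ℝ → ℝ) (x : ℝ) (hx : 0 ≤ x)
    (hA_nonneg : ∀ u, 0 ≤ u → 0 ≤ A u)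
    (hA_mono : ∀ u v, 0 ≤ u → u ≤ v → A v ≤ A u)
    (hA_int : IntegrableOn A (Set.Ioi (0 : ℝ)))
    (hK_int : ∀ u, IntegrableOn
      (fun v => |∫ w in Set.Ioi (0 : ℝ), A (u + w) * A (v + w)|) (Set.Ioi x)) :
    ∀ u, x < u →
      (∫ v in Set.Ioi x, |∫ w in Set.Ioi (0 : ℝ), A (u + w) * A (v + w)|)
        ≤ (∫ v in Set.Ioi x, A v) ^ 2 :=
  stmt_8_general A x hx hA_nonneg hA_mono hA_int
end
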